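/- Let ω ≤ κ < λ be infinite cardinals and let 𝓐 ⊆ [λ]^κ be a hypergraph possessing property C(k,r) for some k, r ∈ ω. Then there is an increasing continuous sequence ⟨G_α : α < cf(λ)⟩ of subsets of λ, each of cardinality < λ, with G_0 = ∅ and ⋃_{α<cf(λ)} G_α = λ, such that for every A ∈ 𝓐 there is α < cf(λ) with A ⊆ G_{α+1} and |G_α ∩ A| < |A|; in particular, if |⋃𝓐| = λ then 𝓐 has a good cut. -/

import Mathlib

/-!
Fix a finite threshold `r ≥ 1` (raising `r` only weakens C(k,r)) and call an edge heavy for `S`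
if it meets `S` in at least `r` points. By C(k,r) an `r`-set lies in fewer than `k` edges, so
`S` has at most `max ℵ₀ |S|` heavy edges, and closing `S` under adding heavy edges (ω rounds)
gives a set of size at most `max |S| κ`. Enumerate `α` in order type `lam`, cut it into
`cf(lam)` initial segments `C_β` of size `< lam`, and put `G_{β+1} = closure (G_β ∪ C_β)`,
with unions at limits. For an edge `A`, the first stage at which `A` has `r` points is a
successor `γ + 1`, because `r` is finite; closedness gives `A ⊆ G_{γ+1}` while
`|A ∩ G_γ| < r < |A|`. Intersecting with `⋃₀ 𝓐` turns this into a good cut.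
-/

open Cardinal Set

universe u

/-- `𝓔` possesses property C(k,ρ): every `k`-element subfamily of `𝓔` has
intersection of cardinality `< ρ`. -/
def HasPropC {α : Type u} (𝓔 : Set (Set α)) (k : ℕ) (ρ : Cardinal.{u}) : Prop :=
  ∀ 𝓔' : Finset (Set α), ↑𝓔' ⊆ 𝓔 → 𝓔'.card = k →
    #(⋂₀ (𝓔' : Set (Set α)) : Set α) < ρ

/-- `Y` is a vertex cover of the hypergraph `𝓔`. -/
def IsVC {α : Type u} (𝓔 : Set (Set α)) (Y : Set α) : Prop :=
  Y ⊆ ⋃₀ 𝓔 ∧ ∀ E ∈ 𝓔, (Y ∩ E).Nonempty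

/-- `Y` is a minimal vertex cover of `𝓔`: a vertex cover no proper subset of
which is a vertex cover. -/
def IsMinVC {α : Type u} (𝓔 : Set (Set α)) (Y : Set α) : Prop :=
  IsVC 𝓔 Y ∧ ∀ Z, Z ⊂ Y → ¬ IsVC 𝓔 Z

/-- `𝓔` has a minimal vertex cover. -/
def HasMinVC {α : Type u} (𝓔 : Set (Set α)) : Prop := ∃ Y, IsMinVC 𝓔 Y

/-- `𝓔` has a maximizing well-ordering: a well-ordering of `⋃₀ 𝓔` in which
every edge has a maximal element. -/
def HasMaxWO {α : Type u} (𝓔 : Set (Set α)) : Prop :=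
  ∃ r : (⋃₀ 𝓔 : Set α) → (⋃₀ 𝓔 : Set α) → Prop, IsWellOrder _ r ∧
    ∀ E ∈ 𝓔, ∃ m : (⋃₀ 𝓔 : Set α), (m : α) ∈ E ∧
      ∀ x : (⋃₀ 𝓔 : Set α), (x : α) ∈ E → ¬ r m x

/-- `𝓑` is a shrink of `𝓐` (`𝓑 ≪ 𝓐`). -/
def IsShrink {α : Type u} (𝓑 𝓐 : Set (Set α)) : Prop :=
  ∀ B ∈ 𝓑, ∃ A ∈ 𝓐, B ⊆ A ∧ #(A \ B : Set α) < #A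

/-- `G` (restricted to the ordinals below `cf(|⋃₀ 𝓐|)`) is a good cut of `𝓐`:
an increasing continuous sequence of subsets of `⋃₀ 𝓐` of cardinality `< |⋃₀ 𝓐|`,
starting at `∅`, with union `⋃₀ 𝓐`, such that every `A ∈ 𝓐` is contained in some
`G (β+1)` with `|G β ∩ A| < |A|`. -/
def IsGoodCut {α : Type u} (𝓐 : Set (Set α)) (G : Ordinal.{u} → Set α) : Prop :=
  (∀ β γ : Ordinal.{u}, β ≤ γ → γ < (#(⋃₀ 𝓐 : Set α)).ord.cof.ord → G β ⊆ G γ) ∧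
  G 0 = ∅ ∧
  (∀ β < (#(⋃₀ 𝓐 : Set α)).ord.cof.ord, Order.IsSuccLimit β → G β = ⋃ γ ∈ Set.Iio β, G γ) ∧
  (∀ β < (#(⋃₀ 𝓐 : Set α)).ord.cof.ord,
    #(G β) < #(⋃₀ 𝓐 : Set α) ∧ G β ⊆ ⋃₀ 𝓐) ∧
  (⋃ β ∈ Set.Iio (#(⋃₀ 𝓐 : Set α)).ord.cof.ord, G β) = ⋃₀ 𝓐 ∧
  (∀ A ∈ 𝓐, ∃ β < (#(⋃₀ 𝓐 : Set α)).ord.cof.ord,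
    A ⊆ G (β + 1) ∧ #(G β ∩ A : Set α) < #A)

variable {α : Type u}

theorem natCast_le_mk_iff_exists_finset {s : Set α} {n : ℕ} :
    (n : Cardinal) ≤ #s ↔ ∃ t : Finset α, ↑t ⊆ s ∧ t.card = n := by
  constructor
  · intro h
    obtain ⟨t, ht⟩ := exists_finset_eq_card h
    exact ⟨t.map (Function.Embedding.subtype _), by simp, by simp [ht]⟩
  · rintro ⟨t, hts, rfl⟩
    exact mk_coe_finset.symm.le.trans (mk_le_mk_of_subset hts)

theorem Directed.exists_natCast_le_mk {ι : Type*} [Nonempty ι] {f : ι → Set α}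
    (hf : Directed (· ⊆ ·) f) {n : ℕ} (hn : (n : Cardinal) ≤ #(⋃ i, f i)) :
    ∃ i, (n : Cardinal) ≤ #(f i) := by
  obtain ⟨t, ht, rfl⟩ := natCast_le_mk_iff_exists_finset.1 hn
  obtain ⟨i, hi⟩ := hf.exists_mem_subset_of_finset_subset_biUnion ht
  exact ⟨i, natCast_le_mk_iff_exists_finset.2 ⟨t, hi, rfl⟩⟩

theorem mk_finset_le_max (β : Type u) : #(Finset β) ≤ max ℵ₀ #β := by
  classical
  exact (mk_le_of_surjective fun s : Finset β => ⟨s.toList, s.toList_toFinset⟩).trans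
    (mk_list_le_max β)

theorem mk_biUnion_Iio_lt_of_lt_cof {lam : Cardinal.{u}} (hlam : ℵ₀ ≤ lam) {β : Ordinal.{u}}
    (hβ : β < lam.ord.cof.ord) {G : Ordinal.{u} → Set α} (hG : ∀ γ < β, #(G γ) < lam) :
    #(⋃ γ ∈ Iio β, G γ) < lam := by
  have hβ' : #β.ToType < lam.ord.cof := by rwa [mk_toType, ← lt_ord]
  rw [biUnion_eq_iUnion, ← (Ordinal.ToType.mk (o := β)).symm.surjective.iUnion_comp]
  refine (mk_iUnion_le _).trans_lt (mul_lt_of_lt hlam (hβ'.trans_le (Ordinal.cof_ord_le lam)) ?_)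
  exact iSup_lt_of_lt_cof_ord hβ' fun i => hG _ (Ordinal.ToType.mk.symm i).2

theorem mk_iUnion_iterate_le {f : Set α → Set α} {μ : Cardinal.{u}} (hμ : ℵ₀ ≤ μ)
    (hf : ∀ S : Set α, #S ≤ μ → #(f S) ≤ μ) {S : Set α} (hS : #S ≤ μ) :
    #(⋃ n : ℕ, f^[n] S) ≤ μ := by
  have hiter : ∀ n, #(f^[n] S) ≤ μ := fun n => by
    induction n with
    | zero => exact hS
    | succ n ih => rw [Function.iterate_succ_apply']; exact hf _ ih
  have := mk_iUnion_le_lift (fun n : ℕ => f^[n] S)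
  simp only [lift_uzero, mk_nat, lift_aleph0] at this
  exact this.trans ((mul_le_mul' hμ (ciSup_le' hiter)).trans (mul_eq_self hμ).le)

def heavyEdges (𝓐 : Set (Set α)) (r : ℕ) (S : Set α) : Set (Set α) :=
  {A ∈ 𝓐 | (r : Cardinal) ≤ #(A ∩ S : Set α)}

def heavyStep (𝓐 : Set (Set α)) (r : ℕ) (S : Set α) : Set α :=
  S ∪ ⋃₀ heavyEdges 𝓐 r S

def heavyClosure (𝓐 : Set (Set α)) (r : ℕ) (S : Set α) : Set α :=
  ⋃ n : ℕ, (heavyStep 𝓐 r)^[n] S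

section Hypergraph

variable {𝓐 : Set (Set α)} {k r : ℕ}

theorem HasPropC.mono {ρ ρ' : Cardinal.{u}} (h : HasPropC 𝓐 k ρ) (hρ : ρ ≤ ρ') :
    HasPropC 𝓐 k ρ' :=
  fun 𝓔 h𝓔 hk => (h 𝓔 h𝓔 hk).trans_le hρ

theorem HasPropC.mk_setOf_superset_lt (h : HasPropC 𝓐 k r) {T : Finset α} (hT : T.card = r) :
    #{A ∈ 𝓐 | ↑T ⊆ A} < k := by
  by_contra! hk
  obtain ⟨𝓔, h𝓔, hcard⟩ := natCast_le_mk_iff_exists_finset.1 hk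
  refine (h 𝓔 (fun A hA => (h𝓔 hA).1) hcard).not_ge ?_
  exact natCast_le_mk_iff_exists_finset.2 ⟨T, subset_sInter fun A hA => (h𝓔 hA).2, hT⟩

theorem HasPropC.mk_heavyEdges_le (h : HasPropC 𝓐 k r) (S : Set α) :
    #(heavyEdges 𝓐 r S) ≤ max ℵ₀ #S := by
  have htrace : ∀ A : heavyEdges 𝓐 r S,
      (r : Cardinal) ≤ #(Subtype.val ⁻¹' (A : Set α) : Set S) := fun A => by
    rw [← mk_image_eq Subtype.val_injective, Subtype.image_preimage_coe, inter_comm]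
    exact A.2.2
  choose T hTA hTcard using fun A => natCast_le_mk_iff_exists_finset.1 (htrace A)
  have hfiber : ∀ b : Finset S, #(T ⁻¹' {b}) ≤ k := by
    intro b
    rcases (T ⁻¹' {b}).eq_empty_or_nonempty with hb | ⟨A₀, rfl : T A₀ = b⟩
    · simp [hb]
    rw [← mk_image_eq Subtype.val_injective]
    refine (mk_le_mk_of_subset ?_).trans
      (h.mk_setOf_superset_lt (T := (T A₀).map (.subtype _)) (by simp [hTcard])).le
    rintro _ ⟨A, hA : T A = T A₀, rfl⟩
    refine ⟨A.2.1, ?_⟩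
    rw [← hA]
    simpa using hTA A
  calc #(heavyEdges 𝓐 r S) ≤ #(Finset S) * k := mk_le_mk_mul_of_mk_preimage_le T hfiber
    _ ≤ max ℵ₀ #S * ℵ₀ := mul_le_mul' (mk_finset_le_max S) natCast_lt_aleph0.le
    _ = max ℵ₀ #S := mul_eq_left (le_max_left _ _) (le_max_left _ _) aleph0_ne_zero

theorem monotone_iterate_heavyStep (S : Set α) :
    Monotone fun n : ℕ => (heavyStep 𝓐 r)^[n] S :=
  monotone_nat_of_le_succ fun n => by
    rw [Function.iterate_succ_apply']
    exact subset_union_left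

theorem subset_heavyClosure (S : Set α) : S ⊆ heavyClosure 𝓐 r S :=
  subset_iUnion (fun n : ℕ => (heavyStep 𝓐 r)^[n] S) 0

theorem subset_heavyClosure_of_le {S A : Set α} (hA : A ∈ 𝓐)
    (h : (r : Cardinal) ≤ #(A ∩ heavyClosure 𝓐 r S : Set α)) : A ⊆ heavyClosure 𝓐 r S := by
  rw [heavyClosure, inter_iUnion] at h
  have hdir : Directed (· ⊆ ·) fun n : ℕ => A ∩ (heavyStep 𝓐 r)^[n] S :=
    Monotone.directed_le fun _ _ hmn =>
      inter_subset_inter_right A (monotone_iterate_heavyStep S hmn)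
  obtain ⟨n, hn⟩ := hdir.exists_natCast_le_mk h
  have hAstep : A ⊆ (heavyStep 𝓐 r)^[n + 1] S := by
    rw [Function.iterate_succ_apply']
    exact (subset_sUnion_of_mem (show A ∈ heavyEdges 𝓐 r _ from ⟨hA, hn⟩)).trans
      subset_union_right
  exact hAstep.trans (subset_iUnion (fun n : ℕ => (heavyStep 𝓐 r)^[n] S) (n + 1))

variable {κ : Cardinal.{u}}

theorem HasPropC.mk_heavyStep_le (h : HasPropC 𝓐 k r) (hκ : ℵ₀ ≤ κ)
    (h𝓐 : ∀ A ∈ 𝓐, #A ≤ κ) {μ : Cardinal.{u}} (hκμ : κ ≤ μ) {S : Set α} (hS : #S ≤ μ) :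
    #(heavyStep 𝓐 r S) ≤ μ := by
  have hμ : ℵ₀ ≤ μ := hκ.trans hκμ
  have hedges : #(heavyEdges 𝓐 r S) ≤ μ := (h.mk_heavyEdges_le S).trans (max_le hμ hS)
  have hunion : #(⋃₀ heavyEdges 𝓐 r S) ≤ μ :=
    calc #(⋃₀ heavyEdges 𝓐 r S)
        ≤ #(heavyEdges 𝓐 r S) * ⨆ A : heavyEdges 𝓐 r S, #(A : Set α) := mk_sUnion_le _
      _ ≤ μ * μ := mul_le_mul' hedges (ciSup_le' fun A => (h𝓐 _ A.2.1).trans hκμ)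
      _ = μ := mul_eq_self hμ
  exact (mk_union_le _ _).trans ((add_le_add hS hunion).trans (add_eq_self hμ).le)

theorem HasPropC.mk_heavyClosure_le (h : HasPropC 𝓐 k r) (hκ : ℵ₀ ≤ κ)
    (h𝓐 : ∀ A ∈ 𝓐, #A ≤ κ) (S : Set α) : #(heavyClosure 𝓐 r S) ≤ max #S κ :=
  mk_iUnion_iterate_le (hκ.trans (le_max_right _ _))
    (fun _ => h.mk_heavyStep_le hκ h𝓐 (le_max_right _ _)) (le_max_left _ _)

end Hypergraph

def closureChain (cl : Set α → Set α) (C : Ordinal.{u} → Set α) (β : Ordinal.{u}) : Set α :=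
  Ordinal.limitRecOn β ∅ (fun γ G => cl (G ∪ C γ)) fun β _ G => ⋃ (γ) (h : γ < β), G γ h

section ClosureChain

variable {cl : Set α → Set α} {C : Ordinal.{u} → Set α}

@[simp]
theorem closureChain_zero : closureChain cl C 0 = ∅ :=
  Ordinal.limitRecOn_zero _ _ _

theorem closureChain_add_one (β : Ordinal.{u}) :
    closureChain cl C (β + 1) = cl (closureChain cl C β ∪ C β) :=
  Ordinal.limitRecOn_add_one _ _ _ _

theorem closureChain_limit {β : Ordinal.{u}} (hβ : Order.IsSuccLimit β) :
    closureChain cl C β = ⋃ γ ∈ Iio β, closureChain cl C γ :=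
  Ordinal.limitRecOn_limit _ _ _ _ hβ

theorem monotone_closureChain (hcl : ∀ S, S ⊆ cl S) : Monotone (closureChain cl C) := by
  refine monotone_iff_forall_lt.2 fun β γ hβγ => ?_
  induction γ using Ordinal.limitRecOn with
  | zero => exact absurd hβγ not_lt_zero
  | add_one γ ih =>
    rw [closureChain_add_one]
    refine subset_trans ?_ (subset_union_left.trans (hcl _))
    rcases (Order.lt_add_one_iff.1 hβγ).eq_or_lt with rfl | hβγ'
    · exact subset_rfl
    · exact ih hβγ'
  | limit γ hγ _ =>
    rw [closureChain_limit hγ]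
    exact subset_biUnion_of_mem (u := closureChain cl C) hβγ

theorem closureChain_eq_univ (hcl : ∀ S, S ⊆ cl S) {o : Ordinal.{u}} (ho : Order.IsSuccLimit o)
    (hC : ⋃ β ∈ Iio o, C β = Set.univ) : closureChain cl C o = Set.univ := by
  refine eq_univ_of_forall fun x => ?_
  obtain ⟨β, hβ, hx⟩ := mem_iUnion₂.1 (hC ▸ mem_univ x)
  have hβo : β + 1 < o := ho.add_one_lt hβ
  rw [closureChain_limit ho]
  refine mem_biUnion hβo ?_
  rw [closureChain_add_one]
  exact hcl _ (mem_union_right _ hx)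

end ClosureChain

theorem mk_closureChain_lt {cl : Set α → Set α} {C : Ordinal.{u} → Set α} {lam : Cardinal.{u}}
    (hlam : ℵ₀ ≤ lam) (hcl : ∀ S : Set α, #S < lam → #(cl S) < lam) (hC : ∀ β, #(C β) < lam) :
    ∀ β < lam.ord.cof.ord, #(closureChain cl C β) < lam := by
  intro β
  induction β using Ordinal.limitRecOn with
  | zero => simp [aleph0_pos.trans_le hlam]
  | add_one γ ih =>
    intro hγ
    rw [closureChain_add_one]
    exact hcl _ ((mk_union_le _ _).trans_lt
      (add_lt_of_lt hlam (ih ((lt_add_one γ).trans hγ)) (hC γ)))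
  | limit β hβ ih =>
    intro hβc
    rw [closureChain_limit hβ]
    exact mk_biUnion_Iio_lt_of_lt_cof hlam hβc fun γ hγ => ih γ hγ (hγ.trans hβc)

theorem exists_iUnion_Iio_cof_eq_univ {lam : Cardinal.{u}} (hα : #α = lam) (hlam : ℵ₀ ≤ lam) :
    ∃ C : Ordinal.{u} → Set α, (∀ β, #(C β) < lam) ∧ ⋃ β ∈ Iio lam.ord.cof.ord, C β = Set.univ := by
  obtain ⟨f, hf⟩ := Ordinal.exists_isFundamentalSeq (o := lam.ord) rfl
  obtain ⟨e⟩ : Nonempty (α ≃ lam.ord.ToType) := Cardinal.eq.1 (by simp [hα])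
  have hIic : ∀ x : lam.ord.ToType, #(Iic x) < lam := fun x => by
    have hIio : #(Iio x) < lam := by simpa using mk_Iio_lt x (by simp)
    rw [← Iio_insert]
    exact mk_insert_le.trans_lt (add_lt_of_lt hlam hIio (one_lt_aleph0.trans_le hlam))
  refine ⟨fun β => if h : β < lam.ord.cof.ord then e ⁻¹' Iic (Ordinal.ToType.mk (f ⟨β, h⟩))
    else ∅, fun β => ?_, eq_univ_of_forall fun x => ?_⟩
  · dsimp only
    split_ifs
    · rw [mk_preimage_equiv]; exact hIic _
    · simpa using aleph0_pos.trans_le hlam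
  · obtain ⟨_, ⟨i, rfl⟩, hi⟩ := hf.isCofinal_range (Ordinal.ToType.mk.symm (e x))
    refine mem_biUnion i.2 ?_
    rw [dif_pos (show (i : Ordinal) < _ from i.2)]
    exact Ordinal.ToType.mk.symm_apply_le.1 hi

theorem exists_lt_of_natCast_le_mk_inter {G : Ordinal.{u} → Set α} (hG : Monotone G)
    (h0 : G 0 = ∅) (hlim : ∀ β, Order.IsSuccLimit β → G β = ⋃ γ ∈ Iio β, G γ)
    {A : Set α} {r : ℕ} (hr : r ≠ 0) {β : Ordinal.{u}} (hβ : (r : Cardinal) ≤ #(A ∩ G β : Set α)) :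
    ∃ γ < β, #(A ∩ G γ : Set α) < r ∧ (r : Cardinal) ≤ #(A ∩ G (γ + 1) : Set α) := by
  induction β using Ordinal.limitRecOn with
  | zero => simp [h0, hr] at hβ
  | add_one γ ih =>
    by_cases hγ : (r : Cardinal) ≤ #(A ∩ G γ : Set α)
    · obtain ⟨δ, hδ, h⟩ := ih hγ
      exact ⟨δ, hδ.trans (lt_add_one γ), h⟩
    · exact ⟨γ, lt_add_one γ, not_le.1 hγ, hβ⟩
  | limit β hβlim ih =>
    rw [hlim β hβlim, inter_iUnion₂, biUnion_eq_iUnion] at hβ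
    have : Nonempty (Iio β) := ⟨⟨0, hβlim.bot_lt⟩⟩
    have hdir : Directed (· ⊆ ·) fun γ : Iio β => A ∩ G γ :=
      Monotone.directed_le fun _ _ h => inter_subset_inter_right A (hG h)
    obtain ⟨⟨γ, hγ⟩, hγr⟩ := hdir.exists_natCast_le_mk hβ
    obtain ⟨δ, hδ, h⟩ := ih γ hγ hγr
    exact ⟨δ, hδ.trans hγ, h⟩

-- `IsGoodCut` with the ambient type `α`, of size `lam`, in place of `⋃₀ 𝓐`.
def IsCut (lam : Cardinal.{u}) (𝓐 : Set (Set α)) (G : Ordinal.{u} → Set α) : Prop :=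
  (∀ β γ : Ordinal.{u}, β ≤ γ → γ < lam.ord.cof.ord → G β ⊆ G γ) ∧
  G 0 = ∅ ∧
  (∀ β < lam.ord.cof.ord, Order.IsSuccLimit β → G β = ⋃ γ ∈ Set.Iio β, G γ) ∧
  (∀ β < lam.ord.cof.ord, #(G β) < lam) ∧
  (⋃ β ∈ Set.Iio lam.ord.cof.ord, G β) = Set.univ ∧
  (∀ A ∈ 𝓐, ∃ β < lam.ord.cof.ord, A ⊆ G (β + 1) ∧ #(G β ∩ A : Set α) < #A)

theorem HasPropC.isCut_closureChain {κ lam : Cardinal.{u}} (hκ : ℵ₀ ≤ κ) (hkl : κ < lam)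
    {𝓐 : Set (Set α)} (hspec : ∀ A ∈ 𝓐, #A = κ) {k r : ℕ} (hr : r ≠ 0) (hC : HasPropC 𝓐 k r)
    {C : Ordinal.{u} → Set α} (hCcard : ∀ β, #(C β) < lam)
    (hCcover : ⋃ β ∈ Iio lam.ord.cof.ord, C β = Set.univ) :
    IsCut lam 𝓐 (closureChain (heavyClosure 𝓐 r) C) := by
  have hlam : ℵ₀ ≤ lam := hκ.trans hkl.le
  have hcof : Order.IsSuccLimit lam.ord.cof.ord :=
    isSuccLimit_ord <| Ordinal.aleph0_le_cof_iff.2 <| Ordinal.one_lt_cof_iff.2 <|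
      isSuccLimit_ord hlam
  have hrA : ∀ A ∈ 𝓐, (r : Cardinal) < #A := fun A hA =>
    (hspec A hA).symm ▸ natCast_lt_aleph0.trans_le hκ
  have hcl : ∀ S, S ⊆ heavyClosure 𝓐 r S := subset_heavyClosure
  have hmono := monotone_closureChain (C := C) hcl
  have hmk : ∀ S : Set α, #S < lam → #(heavyClosure 𝓐 r S) < lam := fun S hS =>
    (hC.mk_heavyClosure_le hκ (fun A hA => (hspec A hA).le) S).trans_lt (max_lt hS hkl)
  have huniv := closureChain_eq_univ hcl hcof hCcover
  refine ⟨fun β γ h _ => hmono h, closureChain_zero, fun β _ => closureChain_limit,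
    mk_closureChain_lt hlam hmk hCcard, (closureChain_limit hcof).symm.trans huniv,
    fun A hA => ?_⟩
  obtain ⟨γ, hγ, hlt, hle⟩ := exists_lt_of_natCast_le_mk_inter hmono closureChain_zero
    (fun β => closureChain_limit) hr (β := lam.ord.cof.ord) (by simpa [huniv] using (hrA A hA).le)
  rw [closureChain_add_one] at hle
  refine ⟨γ, hγ, ?_, inter_comm A _ ▸ hlt.trans (hrA A hA)⟩
  rw [closureChain_add_one]
  exact subset_heavyClosure_of_le hA hle

theorem IsCut.isGoodCut_inter_sUnion {𝓐 : Set (Set α)} {G : Ordinal.{u} → Set α}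
    (hG : IsCut #(⋃₀ 𝓐) 𝓐 G) : IsGoodCut 𝓐 fun β => G β ∩ ⋃₀ 𝓐 := by
  obtain ⟨hmono, h0, hlim, hcard, hcover, hedge⟩ := hG
  refine ⟨fun β γ h hγ => inter_subset_inter_left _ (hmono β γ h hγ), by simp [h0],
    fun β hβ hβlim => by simp only [hlim β hβ hβlim, iUnion₂_inter],
    fun β hβ => ⟨(mk_le_mk_of_subset inter_subset_left).trans_lt (hcard β hβ), inter_subset_right⟩,
    by rw [← iUnion₂_inter, hcover, univ_inter], fun A hA => ?_⟩
  obtain ⟨β, hβ, hsub, hlt⟩ := hedge A hA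
  exact ⟨β, hβ, subset_inter hsub (subset_sUnion_of_mem hA),
    (mk_le_mk_of_subset (inter_subset_inter_left A inter_subset_left)).trans_lt hlt⟩

/-- If `ω ≤ κ < lam` and `𝓐 ⊆ [lam]^κ` possesses property C(k,r) for some
`k, r ∈ ω`, then there is an increasing continuous sequence
`⟨G_β : β < cf(lam)⟩` of subsets of `lam`, each of cardinality `< lam`, with
`G_0 = ∅` and union all of `lam`, such that every `A ∈ 𝓐` satisfies
`A ⊆ G (β+1)` and `|G β ∩ A| < |A|` for some `β < cf(lam)`; in particular, if
`|⋃₀ 𝓐| = lam` then `𝓐` has a good cut. -/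
theorem goodCut_of_propC {α : Type u}
    (κ lam : Cardinal.{u}) (hκ : ℵ₀ ≤ κ) (hkl : κ < lam) (hα : #α = lam)
    (k r : ℕ)
    (𝓐 : Set (Set α)) (hspec : ∀ A ∈ 𝓐, #A = κ)
    (hC : HasPropC 𝓐 k r) :
    (∃ G : Ordinal.{u} → Set α,
      (∀ β γ : Ordinal.{u}, β ≤ γ → γ < lam.ord.cof.ord → G β ⊆ G γ) ∧
      G 0 = ∅ ∧
      (∀ β < lam.ord.cof.ord, Order.IsSuccLimit β → G β = ⋃ γ ∈ Set.Iio β, G γ) ∧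
      (∀ β < lam.ord.cof.ord, #(G β) < lam) ∧
      (⋃ β ∈ Set.Iio lam.ord.cof.ord, G β) = Set.univ ∧
      (∀ A ∈ 𝓐, ∃ β < lam.ord.cof.ord,
        A ⊆ G (β + 1) ∧ #(G β ∩ A : Set α) < #A)) ∧
    (#(⋃₀ 𝓐 : Set α) = lam → ∃ G', IsGoodCut 𝓐 G') := by
  obtain ⟨C, hCcard, hCcover⟩ := exists_iUnion_Iio_cof_eq_univ hα (hκ.trans hkl.le)
  have hG := (hC.mono (by exact_mod_cast le_max_left r 1)).isCut_closureChain hκ hkl hspec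
    (by omega : max r 1 ≠ 0) hCcard hCcover
  exact ⟨⟨_, hG⟩, fun hU => ⟨_, (hU ▸ hG).isGoodCut_inter_sUnion⟩⟩
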